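/- arXiv:2206.02845 — 6 statements merged into one kernel-verified Lean document; each statement's English description precedes it below -/
import Mathlib

section
/- Under the replacement operation, the recall is stochastically monotone: let S ⊆ D, x_i ∈ S, x_j ∈ D\S, with φ(x_i) ≤ φ(x_j), and S' = (S ∪ {x_j}) \ {x_i}. With independent Bernoulli variables B_x with parameters φ(x), N_T = Σ_{x∈T} B_x, and recall M_r(T) = N_T/N_D (defined as 1 when N_D = 0), we have Pr[M_r(S) ≥ γ] ≤ Pr[M_r(S') ≥ γ] for all γ ∈ (0,1). -/
open MeasureTheory ProbabilityTheory Finset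

/-! Write `X = B xi`, `Y = B xj` and `W` for the counts of the remaining items of `D` and of
`S`. The recall of `S'` is the recall of `S` with the roles of `X` and `Y` exchanged, so the two
events agree on `{X = Y}`. Since `W` is independent of `(X, Y)`, the remaining difference of
probabilities factors as `(P{X = 0, Y = 1} - P{X = 1, Y = 0}) * (P(C₁) - P(C₀))`, where `Cᵢ` is the
event that the item counted in the set contributes `i`. The first factor is `P{Y = 1} - P{X = 1}`,
the second is nonnegative because `C₀ ⊆ C₁`. -/

lemma measure_sdiff_le_measure_sdiff_of_le {α : Type*} [MeasurableSpace α] {μ : Measure α}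
    [IsFiniteMeasure μ] {s t : Set α} (hs : MeasurableSet s) (ht : MeasurableSet t)
    (h : μ s ≤ μ t) : μ (s \ t) ≤ μ (t \ s) := by
  rw [← measure_inter_add_sdiff s ht, ← measure_inter_add_sdiff t hs, Set.inter_comm] at h
  exact ENNReal.le_of_add_le_add_left (measure_ne_top _ _) h

lemma CanonicallyOrderedAdd.mul_add_mul_le_mul_add_mul' {R : Type*} [CommSemiring R]
    [PartialOrder R] [IsOrderedRing R] [CanonicallyOrderedAdd R] {a b c d : R}
    (hba : b ≤ a) (hdc : d ≤ c) : a * d + b * c ≤ a * c + b * d := by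
  obtain ⟨e, rfl⟩ := exists_add_of_le hdc
  calc a * d + b * (d + e) = a * d + b * d + b * e := by ring
    _ ≤ a * d + b * d + a * e := by gcongr
    _ = a * (d + e) + b * d := by ring

lemma ProbabilityTheory.iIndepFun.indepFun_prodMk_sum_sum {Ω ι : Type*} [MeasurableSpace Ω]
    {P : Measure Ω} {f : ι → Ω → ℕ} (hf : iIndepFun f P) (hm : ∀ i, Measurable (f i))
    {i j : ι} {s u : Finset ι} (his : i ∉ s) (hjs : j ∉ s) (hiu : i ∉ u) (hju : j ∉ u) :
    IndepFun (fun ω => (f i ω, f j ω)) (fun ω => (∑ k ∈ s, f k ω, ∑ k ∈ u, f k ω)) P := by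
  classical
  have hdisj : Disjoint {i, j} (s ∪ u) := by
    simp [Finset.disjoint_left, his, hjs, hiu, hju]
  have key := (hf.indepFun_finset _ _ hdisj hm).comp
    (φ := fun g => (g ⟨i, by simp⟩, g ⟨j, by simp⟩))
    (ψ := fun g => (∑ k : s, g ⟨k, mem_union_left u k.2⟩, ∑ k : u, g ⟨k, mem_union_right s k.2⟩))
    (by fun_prop) (by fun_prop)
  convert key using 1
  · rfl
  · funext ω
    simp only [Function.comp_apply]
    rw [Finset.sum_coe_sort s (fun k => f k ω), Finset.sum_coe_sort u (fun k => f k ω)]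

section Swap

variable {Ω β : Type*} [MeasurableSpace Ω] [MeasurableSpace β] {P : Measure Ω}
  {X Y : Ω → ℕ} {W : Ω → β}

lemma measure_one_zero_le_zero_one [IsFiniteMeasure P] (hX : ∀ ω, X ω = 0 ∨ X ω = 1)
    (hY : ∀ ω, Y ω = 0 ∨ Y ω = 1) (hXm : Measurable X) (hYm : Measurable Y)
    (hp : P {ω | X ω = 1} ≤ P {ω | Y ω = 1}) :
    P {ω | X ω = 1 ∧ Y ω = 0} ≤ P {ω | X ω = 0 ∧ Y ω = 1} := by
  have key := measure_sdiff_le_measure_sdiff_of_le (hXm (measurableSet_singleton 1))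
    (hYm (measurableSet_singleton 1)) hp
  convert key using 2 <;> ext ω <;> simp only [Set.mem_ofPred_eq, Set.mem_sdiff] <;>
    grind

lemma measure_eq_diag_add_offDiag (hX : ∀ ω, X ω = 0 ∨ X ω = 1)
    (hY : ∀ ω, Y ω = 0 ∨ Y ω = 1) (hXm : Measurable X) (hYm : Measurable Y)
    (hWm : Measurable W) (G : ℕ → ℕ → β → Prop) (hG : ∀ a b, MeasurableSet {w | G a b w}) :
    P {ω | G (X ω) (Y ω) (W ω)} = P {ω | G (X ω) (Y ω) (W ω) ∧ X ω = Y ω} +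
      (P {ω | (X ω = 0 ∧ Y ω = 1) ∧ G 0 1 (W ω)} +
        P {ω | (X ω = 1 ∧ Y ω = 0) ∧ G 1 0 (W ω)}) := by
  have hm : ∀ a b, MeasurableSet {ω | (X ω = a ∧ Y ω = b) ∧ G a b (W ω)} := fun a b =>
    ((hXm (measurableSet_singleton a)).inter (hYm (measurableSet_singleton b))).inter
      (hWm (hG a b))
  rw [← measure_union _ (hm 1 0), ← measure_union _ ((hm 0 1).union (hm 1 0))]
  · congr 1
    ext ω
    simp only [Set.mem_ofPred_eq, Set.mem_union]
    rcases hX ω with h1 | h1 <;> rcases hY ω with h2 | h2 <;> simp [h1, h2]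
  · rw [Set.disjoint_left]
    rintro ω ⟨-, h⟩ (⟨⟨h1, h2⟩, -⟩ | ⟨⟨h1, h2⟩, -⟩) <;> omega
  · rw [Set.disjoint_left]
    rintro ω ⟨⟨h1, -⟩, -⟩ ⟨⟨h2, -⟩, -⟩
    omega

lemma ProbabilityTheory.IndepFun.measure_pair_eq_and_mul
    (hXYW : IndepFun (fun ω => (X ω, Y ω)) W P) (a b : ℕ) {G : β → Prop}
    (hG : MeasurableSet {w | G w}) :
    P {ω | (X ω = a ∧ Y ω = b) ∧ G (W ω)} = P {ω | X ω = a ∧ Y ω = b} * P {ω | G (W ω)} := by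
  have h := hXYW.measure_inter_preimage_eq_mul {(a, b)} _ (measurableSet_singleton _) hG
  simp only [Set.preimage, Set.mem_singleton_iff, Prod.mk.injEq] at h
  exact h

theorem measure_le_measure_swap [IsFiniteMeasure P] (hX : ∀ ω, X ω = 0 ∨ X ω = 1)
    (hY : ∀ ω, Y ω = 0 ∨ Y ω = 1) (hXm : Measurable X) (hYm : Measurable Y)
    (hWm : Measurable W) (hXYW : IndepFun (fun ω => (X ω, Y ω)) W P)
    (hp : P {ω | X ω = 1} ≤ P {ω | Y ω = 1}) (F : ℕ → ℕ → β → Prop)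
    (hF : ∀ a b, MeasurableSet {w | F a b w}) (hmono : ∀ w, F 0 1 w → F 1 0 w) :
    P {ω | F (X ω) (Y ω) (W ω)} ≤ P {ω | F (Y ω) (X ω) (W ω)} := by
  rw [measure_eq_diag_add_offDiag hX hY hXm hYm hWm F hF,
    measure_eq_diag_add_offDiag hX hY hXm hYm hWm (fun a b => F b a) (fun a b => hF b a)]
  have hdiag :
      {ω | F (X ω) (Y ω) (W ω) ∧ X ω = Y ω} = {ω | F (Y ω) (X ω) (W ω) ∧ X ω = Y ω} := by
    ext ω
    simp only [Set.mem_ofPred_eq]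
    constructor <;> rintro ⟨h, he⟩ <;> refine ⟨?_, he⟩ <;> simpa [he] using h
  rw [hdiag]
  refine add_le_add le_rfl ?_
  rw [hXYW.measure_pair_eq_and_mul 0 1 (hF 0 1), hXYW.measure_pair_eq_and_mul 1 0 (hF 1 0),
    hXYW.measure_pair_eq_and_mul 0 1 (hF 1 0), hXYW.measure_pair_eq_and_mul 1 0 (hF 0 1)]
  exact CanonicallyOrderedAdd.mul_add_mul_le_mul_add_mul'
    (measure_one_zero_le_zero_one hX hY hXm hYm hp) (measure_mono fun ω => hmono (W ω))

end Swap

/-- The recall of a set that contains the item with count `a` but not the one with count `b`,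
when the other items of `D` have total count `w.1`, of which `w.2` lie in the set. -/
noncomputable def splitRecall (a b : ℕ) (w : ℕ × ℕ) : ℝ :=
  if a + (b + w.1) = 0 then 1 else ((a + w.2 : ℕ) : ℝ) / ((a + (b + w.1) : ℕ) : ℝ)

lemma splitRecall_zero_one_le (w : ℕ × ℕ) : splitRecall 0 1 w ≤ splitRecall 1 0 w := by
  simp only [splitRecall, zero_add, Nat.add_eq_zero_iff, one_ne_zero, false_and, if_false]
  exact div_le_div_of_nonneg_right (by exact_mod_cast Nat.le_add_left _ _) (Nat.cast_nonneg _)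

theorem stmt_6_general {Ω ι : Type*} [MeasurableSpace Ω] [DecidableEq ι]
    (P : Measure Ω) [IsProbabilityMeasure P]
    (D S : Finset ι) (hSD : S ⊆ D)
    (xi xj : ι) (hxi : xi ∈ S) (hxj : xj ∈ D \ S)
    (φ : ι → ℝ) (hij : φ xi ≤ φ xj)
    (B : ι → Ω → ℕ)
    (hmeas : ∀ x, Measurable (B x))
    (hBern : ∀ x ω, B x ω = 0 ∨ B x ω = 1)
    (hprob : ∀ x, (P {ω | B x ω = 1}).toReal = φ x)
    (hindep : iIndepFun B P) :
    ∀ γ : ℝ, 0 < γ → γ < 1 →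
      P {ω | γ ≤ (if (∑ x ∈ D, B x ω) = 0 then (1 : ℝ)
          else (∑ x ∈ S, B x ω : ℝ) / (∑ x ∈ D, B x ω : ℝ))} ≤
      P {ω | γ ≤ (if (∑ x ∈ D, B x ω) = 0 then (1 : ℝ)
          else (∑ x ∈ insert xj (S.erase xi), B x ω : ℝ) /
            (∑ x ∈ D, B x ω : ℝ))} := by
  intro γ _ _
  obtain ⟨hxjD, hxjS⟩ := mem_sdiff.mp hxj
  have hne : xi ≠ xj := ne_of_mem_of_not_mem hxi hxjS
  have hxjS' : xj ∉ S.erase xi := fun h => hxjS (mem_of_mem_erase h)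
  set t := (D.erase xi).erase xj
  have hsplit : ∀ g : ι → ℕ, ∑ x ∈ D, g x = g xi + (g xj + ∑ x ∈ t, g x) := fun g => by
    rw [add_sum_erase _ _ (mem_erase.mpr ⟨hne.symm, hxjD⟩), add_sum_erase _ _ (hSD hxi)]
  let W : Ω → ℕ × ℕ := fun ω => (∑ x ∈ t, B x ω, ∑ x ∈ S.erase xi, B x ω)
  let F : ℕ → ℕ → ℕ × ℕ → Prop := fun a b w => γ ≤ splitRecall a b w
  have hE : {ω | γ ≤ (if (∑ x ∈ D, B x ω) = 0 then (1 : ℝ)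
      else (∑ x ∈ S, B x ω : ℝ) / (∑ x ∈ D, B x ω : ℝ))} = {ω | F (B xi ω) (B xj ω) (W ω)} := by
    ext ω
    simp only [Set.mem_ofPred_eq, ← Nat.cast_sum]
    rw [hsplit, ← add_sum_erase _ _ hxi]
    rfl
  have hE' : {ω | γ ≤ (if (∑ x ∈ D, B x ω) = 0 then (1 : ℝ)
      else (∑ x ∈ insert xj (S.erase xi), B x ω : ℝ) / (∑ x ∈ D, B x ω : ℝ))} =
      {ω | F (B xj ω) (B xi ω) (W ω)} := by
    ext ω
    simp only [Set.mem_ofPred_eq, ← Nat.cast_sum]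
    rw [hsplit, add_left_comm, sum_insert hxjS']
    rfl
  have hp : P {ω | B xi ω = 1} ≤ P {ω | B xj ω = 1} :=
    (ENNReal.toReal_le_toReal (measure_ne_top _ _) (measure_ne_top _ _)).mp
      (by rw [hprob, hprob]; exact hij)
  rw [hE, hE']
  exact measure_le_measure_swap (hBern xi) (hBern xj) (hmeas xi) (hmeas xj) (by fun_prop)
    (hindep.indepFun_prodMk_sum_sum hmeas (by simp [t]) (by simp [t]) (notMem_erase xi S) hxjS')
    hp F (fun _ _ => MeasurableSet.of_discrete) (fun w h => h.trans (splitRecall_zero_one_le w))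

/-- Monotonicity of recall under replacement: replacing `xᵢ ∈ S` by
`xⱼ ∉ S` with `φ(xᵢ) ≤ φ(xⱼ)` stochastically increases the recall
`M_r(T) = N_T / N_D` (equal to `1` when `N_D = 0`). -/
theorem stmt_6 {Ω ι : Type*} [MeasurableSpace Ω] [DecidableEq ι]
    (P : Measure Ω) [IsProbabilityMeasure P]
    (D S : Finset ι) (hSD : S ⊆ D)
    (xi xj : ι) (hxi : xi ∈ S) (hxj : xj ∈ D \ S)
    (φ : ι → ℝ) (hφ : ∀ x, 0 ≤ φ x ∧ φ x ≤ 1) (hij : φ xi ≤ φ xj)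
    (B : ι → Ω → ℕ)
    (hmeas : ∀ x, Measurable (B x))
    (hBern : ∀ x ω, B x ω = 0 ∨ B x ω = 1)
    (hprob : ∀ x, (P {ω | B x ω = 1}).toReal = φ x)
    (hindep : iIndepFun B P) :
    ∀ γ : ℝ, 0 < γ → γ < 1 →
      P {ω | γ ≤ (if (∑ x ∈ D, B x ω) = 0 then (1 : ℝ)
          else (∑ x ∈ S, B x ω : ℝ) / (∑ x ∈ D, B x ω : ℝ))} ≤
      P {ω | γ ≤ (if (∑ x ∈ D, B x ω) = 0 then (1 : ℝ)
          else (∑ x ∈ insert xj (S.erase xi), B x ω : ℝ) /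
            (∑ x ∈ D, B x ω : ℝ))} :=
  stmt_6_general P D S hSD xi xj hxi hxj φ hij B hmeas hBern hprob hindep
end

section
/- Among all subsets of size k, the proxy top-k subset is optimal: if D_k denotes a k-element subset of D consisting of elements with the k largest values of φ, then for any S ⊆ D with |S| = k and any γ ∈ (0,1), Pr[M(D_k) ≥ γ] ≥ Pr[M(S) ≥ γ] and E[M̄(D_k)] ≥ E[M̄(S)], where M is precision or recall (and M̄ the other). -/
/-!
Let `R = {x ∈ D | B x = 1}`. Precision and recall of `S`, as well as the indicators of the events
`γ ≤ M(S)`, are of the form `G (#(S ∩ R)) (#R)` with `G` nondecreasing in its first argument, and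
`P(R = T) = ∏_{a ∈ D} (φ a if a ∈ T else 1 - φ a)`. Exchanging some `y ∈ S \ Dk` for some
`x ∈ Dk \ S` (so `φ y ≤ φ x`) cannot decrease `E[G (#(S ∩ R)) (#R)]`: the exchange amounts to
swapping `x` and `y` in `R`, which only affects outcomes containing exactly one of them, and there
`R ∋ x` is the more likely case and the one that favours the new set. Every exchange shrinks
`S \ Dk`, so finitely many of them turn `S` into `Dk`.
-/

open MeasureTheory ProbabilityTheory Finset

section Combinatorics

variable {ι : Type*} [DecidableEq ι]

noncomputable def bernoulliWeight (φ : ι → ℝ) (D T : Finset ι) : ℝ :=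
  ∏ a ∈ D, if a ∈ T then φ a else 1 - φ a

lemma bernoulliWeight_nonneg {φ : ι → ℝ} (hφ : ∀ x, 0 ≤ φ x ∧ φ x ≤ 1) (D T : Finset ι) :
    0 ≤ bernoulliWeight φ D T :=
  prod_nonneg fun a _ => by split_ifs <;> linarith [hφ a]

lemma sum_powerset_insert_bernoulliWeight_mul (φ : ι → ℝ) {D : Finset ι} {a : ι} (ha : a ∉ D)
    (g : Finset ι → ℝ) :
    ∑ T ∈ (insert a D).powerset, bernoulliWeight φ (insert a D) T * g T =
      ∑ T ∈ D.powerset, bernoulliWeight φ D T * ((1 - φ a) * g T + φ a * g (insert a T)) := by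
  rw [sum_powerset_insert ha, ← sum_add_distrib]
  refine sum_congr rfl fun T hT => ?_
  have haT : a ∉ T := fun h => ha (mem_powerset.mp hT h)
  have hrest : ∀ b ∈ D, (b ∈ insert a T ↔ b ∈ T) := fun b hb =>
    ⟨fun h => (mem_insert.mp h).resolve_left (by rintro rfl; exact ha hb), mem_insert_of_mem⟩
  simp only [bernoulliWeight, prod_insert ha, if_neg haT, if_pos (mem_insert_self a T),
    prod_congr rfl fun b hb => if_congr (hrest b hb) rfl rfl]
  ring

lemma image_swap_of_notMem {x y : ι} {T : Finset ι} (hx : x ∉ T) (hy : y ∉ T) :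
    T.image (Equiv.swap x y) = T := by
  conv_rhs => rw [← image_id (s := T)]
  exact image_congr fun a ha => Equiv.swap_apply_of_ne_of_ne (by rintro rfl; exact hx ha)
    (by rintro rfl; exact hy ha)

lemma image_swap_eq_insert_erase {x y : ι} {S : Finset ι} (hx : x ∉ S) (hy : y ∈ S) :
    S.image (Equiv.swap x y) = insert x (S.erase y) := by
  conv_lhs => rw [← insert_erase hy]
  rw [image_insert, Equiv.swap_apply_right,
    image_swap_of_notMem (fun h => hx (mem_of_mem_erase h)) (notMem_erase y S)]

lemma sum_bernoulliWeight_mul_image_swap_le {φ : ι → ℝ} (hφ : ∀ x, 0 ≤ φ x ∧ φ x ≤ 1)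
    {D : Finset ι} {x y : ι} (hx : x ∈ D) (hy : y ∈ D) (hxy : x ≠ y) (hφxy : φ y ≤ φ x)
    (g : Finset ι → ℝ) (hg : ∀ T, x ∉ T → y ∉ T → g (insert y T) ≤ g (insert x T)) :
    ∑ T ∈ D.powerset, bernoulliWeight φ D T * g (T.image (Equiv.swap x y)) ≤
      ∑ T ∈ D.powerset, bernoulliWeight φ D T * g T := by
  set D₀ := (D.erase x).erase y
  have hyD₀ : y ∉ D₀ := notMem_erase y _
  have hxD₀ : x ∉ insert y D₀ := by simp [D₀, hxy]
  have hD : D = insert x (insert y D₀) := by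
    rw [insert_erase (mem_erase.mpr ⟨hxy.symm, hy⟩), insert_erase hx]
  rw [hD]
  simp only [sum_powerset_insert_bernoulliWeight_mul φ hxD₀,
    sum_powerset_insert_bernoulliWeight_mul φ hyD₀]
  refine sum_le_sum fun T hT => ?_
  -- The sides differ by `(φ x - φ y) * (g (insert x T) - g (insert y T))` times the weight of `T`.
  have hxT : x ∉ T := fun h => hxD₀ (mem_insert_of_mem (mem_powerset.mp hT h))
  have hyT : y ∉ T := fun h => hyD₀ (mem_powerset.mp hT h)
  simp only [image_insert, image_swap_of_notMem hxT hyT, Equiv.swap_apply_left,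
    Equiv.swap_apply_right, insert_comm y x T]
  have := mul_nonneg (mul_nonneg (bernoulliWeight_nonneg hφ D₀ T) (sub_nonneg.2 (hg T hxT hyT)))
    (sub_nonneg.2 hφxy)
  nlinarith

lemma le_of_forall_exchange {D Dk : Finset ι} (hDkD : Dk ⊆ D) (f : Finset ι → ℝ)
    (hf : ∀ S ⊆ D, ∀ x ∈ Dk \ S, ∀ y ∈ S \ Dk, f S ≤ f (insert x (S.erase y)))
    {S : Finset ι} (hSD : S ⊆ D) (hcard : S.card = Dk.card) : f S ≤ f Dk := by
  induction hn : (S \ Dk).card generalizing S with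
  | zero =>
    rw [card_eq_zero, sdiff_eq_empty_iff_subset] at hn
    rw [eq_of_subset_of_card_le hn hcard.ge]
  | succ n ih =>
    obtain ⟨y, hy⟩ : (S \ Dk).Nonempty := card_pos.mp (by omega)
    obtain ⟨x, hx⟩ : (Dk \ S).Nonempty := by
      rw [← card_pos, card_sdiff_comm hcard.symm]; omega
    have hxS : x ∉ S.erase y := fun h => (mem_sdiff.mp hx).2 (mem_of_mem_erase h)
    refine (hf S hSD x hx y hy).trans (ih ?_ ?_ ?_)
    · exact insert_subset (hDkD (mem_sdiff.mp hx).1) ((erase_subset y S).trans hSD)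
    · rw [card_insert_of_notMem hxS, card_erase_add_one (mem_sdiff.mp hy).1, hcard]
    · rw [insert_sdiff_of_mem _ (mem_sdiff.mp hx).1, erase_sdiff_comm,
        card_erase_of_mem hy, hn, Nat.add_sub_cancel]

lemma sum_bernoulliWeight_mul_le_top {φ : ι → ℝ} (hφ : ∀ x, 0 ≤ φ x ∧ φ x ≤ 1)
    {D Dk S : Finset ι} (hDkD : Dk ⊆ D) (htop : ∀ x ∈ Dk, ∀ y ∈ D \ Dk, φ y ≤ φ x)
    (hSD : S ⊆ D) (hcard : S.card = Dk.card)
    (G : ℕ → ℕ → ℝ) (hG : ∀ m n, G m n ≤ G (m + 1) n) :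
    ∑ T ∈ D.powerset, bernoulliWeight φ D T * G (S ∩ T).card T.card ≤
      ∑ T ∈ D.powerset, bernoulliWeight φ D T * G (Dk ∩ T).card T.card := by
  refine le_of_forall_exchange hDkD (fun S => ∑ T ∈ D.powerset,
    bernoulliWeight φ D T * G (S ∩ T).card T.card) (fun S hSD x hx y hy => ?_) hSD hcard
  obtain ⟨hxDk, hxS⟩ := mem_sdiff.mp hx
  obtain ⟨hyS, hyDk⟩ := mem_sdiff.mp hy
  have hxy : x ≠ y := by rintro rfl; exact hxS hyS
  set σ := Equiv.swap x y
  set S' := insert x (S.erase y)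
  have hS' : S.image σ = S' := image_swap_eq_insert_erase hxS hyS
  have hcard_swap : ∀ T, (S' ∩ T.image σ).card = (S ∩ T).card := fun T => by
    rw [← hS', ← image_inter _ _ σ.injective, card_image_of_injective _ σ.injective]
  have hx' : x ∈ S' := mem_insert_self x _
  have hy' : y ∉ S' := by simp [S', hxy.symm]
  calc ∑ T ∈ D.powerset, bernoulliWeight φ D T * G (S ∩ T).card T.card
      = ∑ T ∈ D.powerset, bernoulliWeight φ D T *
          G (S' ∩ T.image σ).card (T.image σ).card := by
        simp only [hcard_swap, card_image_of_injective _ σ.injective]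
    _ ≤ ∑ T ∈ D.powerset, bernoulliWeight φ D T * G (S' ∩ T).card T.card :=
        sum_bernoulliWeight_mul_image_swap_le hφ (hDkD hxDk) (hSD hyS) hxy
          (htop x hxDk y (mem_sdiff.mpr ⟨hSD hyS, hyDk⟩)) (fun T => G (S' ∩ T).card T.card)
          fun T hxT hyT => by
            simp only [inter_insert_of_notMem hy', inter_insert_of_mem hx',
              card_insert_of_notMem hxT, card_insert_of_notMem hyT,
              card_insert_of_notMem fun h => hxT (mem_inter.mp h).2]
            exact hG _ _

end Combinatorics

section Probability

variable {Ω ι : Type*}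

structure IsBernoulliFamily [MeasurableSpace Ω] (P : Measure Ω) (φ : ι → ℝ) (B : ι → Ω → ℕ) :
    Prop where
  measurable : ∀ x, Measurable (B x)
  zero_or_one : ∀ x ω, B x ω = 0 ∨ B x ω = 1
  prob_eq_one : ∀ x, (P {ω | B x ω = 1}).toReal = φ x
  indep : iIndepFun B P

def positiveSet (D : Finset ι) (B : ι → Ω → ℕ) (ω : Ω) : Finset ι :=
  {x ∈ D | B x ω = 1}

variable {B : ι → Ω → ℕ} {D : Finset ι}

lemma positiveSet_subset {ω : Ω} : positiveSet D B ω ⊆ D := filter_subset _ _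

variable [DecidableEq ι]

lemma sum_eq_card_inter_positiveSet (hB : ∀ x ω, B x ω = 0 ∨ B x ω = 1) {U : Finset ι}
    (hU : U ⊆ D) (ω : Ω) : ∑ x ∈ U, B x ω = (U ∩ positiveSet D B ω).card := by
  have : U ∩ positiveSet D B ω = {x ∈ U | B x ω = 1} := by
    ext a; simp only [positiveSet, mem_inter, mem_filter]; grind
  rw [this, card_filter]
  exact sum_congr rfl fun a _ => by rcases hB a ω with h | h <;> simp [h]

lemma sum_eq_card_positiveSet (hB : ∀ x ω, B x ω = 0 ∨ B x ω = 1) (ω : Ω) :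
    ∑ x ∈ D, B x ω = (positiveSet D B ω).card := by
  rw [sum_eq_card_inter_positiveSet hB subset_rfl, inter_eq_right.2 positiveSet_subset]

lemma setOf_positiveSet_eq (hB : ∀ x ω, B x ω = 0 ∨ B x ω = 1) {T : Finset ι} (hT : T ⊆ D) :
    {ω | positiveSet D B ω = T} = ⋂ a ∈ D, B a ⁻¹' {if a ∈ T then 1 else 0} := by
  ext ω
  simp only [positiveSet, Set.mem_ofPred_eq, Set.mem_iInter, Set.mem_preimage,
    Set.mem_singleton_iff, Finset.ext_iff, mem_filter]
  constructor
  · intro h a ha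
    split_ifs with haT
    · exact ((h a).mpr haT).2
    · exact (hB a ω).resolve_right fun h1 => haT ((h a).mp ⟨ha, h1⟩)
  · intro h a
    by_cases haT : a ∈ T
    · simpa [haT, hT haT] using h a (hT haT)
    · simp only [haT, iff_false, not_and]
      intro ha h1
      simpa [haT, h1] using h a ha

variable [MeasurableSpace Ω]

lemma measurableSet_positiveSet_eq (hmeas : ∀ x, Measurable (B x))
    (hB : ∀ x ω, B x ω = 0 ∨ B x ω = 1) {T : Finset ι} (hT : T ⊆ D) :
    MeasurableSet {ω | positiveSet D B ω = T} := by
  rw [setOf_positiveSet_eq hB hT]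
  exact D.measurableSet_biInter fun a _ => hmeas a (measurableSet_singleton _)

lemma measurableSet_setOf_positiveSet (hmeas : ∀ x, Measurable (B x))
    (hB : ∀ x ω, B x ω = 0 ∨ B x ω = 1) (p : Finset ι → Prop) :
    MeasurableSet {ω | p (positiveSet D B ω)} := by
  classical
  have : {ω | p (positiveSet D B ω)} =
      ⋃ T ∈ D.powerset.filter p, {ω | positiveSet D B ω = T} := by
    ext ω
    simp only [Set.mem_ofPred_eq, Set.mem_iUnion, mem_filter, mem_powerset, exists_prop]
    exact ⟨fun h => ⟨_, ⟨positiveSet_subset, h⟩, rfl⟩, by rintro ⟨T, ⟨-, hT⟩, rfl⟩; exact hT⟩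
  rw [this]
  exact measurableSet_biUnion _ fun T hT =>
    measurableSet_positiveSet_eq hmeas hB (mem_powerset.mp (mem_filter.mp hT).1)

variable {P : Measure Ω} [IsProbabilityMeasure P] {φ : ι → ℝ}

lemma measureReal_positiveSet_eq (hB : IsBernoulliFamily P φ B) {T : Finset ι} (hT : T ⊆ D) :
    P.real {ω | positiveSet D B ω = T} = bernoulliWeight φ D T := by
  rw [measureReal_def, setOf_positiveSet_eq hB.zero_or_one hT,
    hB.indep.meas_biInter fun a _ => ⟨_, measurableSet_singleton _, rfl⟩,
    ENNReal.toReal_prod, bernoulliWeight]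
  refine prod_congr rfl fun a _ => ?_
  have hone : B a ⁻¹' {1} = {ω | B a ω = 1} := rfl
  have hzero : B a ⁻¹' {0} = {ω | B a ω = 1}ᶜ := by
    ext ω; rcases hB.zero_or_one a ω with h | h <;> simp [h]
  split_ifs
  · rw [hone, hB.prob_eq_one]
  · rw [hzero, prob_compl_eq_one_sub (hone ▸ hB.measurable a (measurableSet_singleton 1)),
      ENNReal.toReal_sub_of_le prob_le_one ENNReal.one_ne_top, ENNReal.toReal_one,
      hB.prob_eq_one]

lemma integral_comp_positiveSet (hB : IsBernoulliFamily P φ B) (F : Finset ι → ℝ) :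
    ∫ ω, F (positiveSet D B ω) ∂P = ∑ T ∈ D.powerset, bernoulliWeight φ D T * F T := by
  have hF : ∀ ω, F (positiveSet D B ω) =
      ∑ T ∈ D.powerset, {ω | positiveSet D B ω = T}.indicator (fun _ => F T) ω := fun ω => by
    simp only [Set.indicator_apply, Set.mem_ofPred_eq]
    rw [sum_ite_eq, if_pos (mem_powerset.mpr positiveSet_subset)]
  have hmeasT : ∀ T ∈ D.powerset, MeasurableSet {ω | positiveSet D B ω = T} := fun T hT =>
    measurableSet_positiveSet_eq hB.measurable hB.zero_or_one (mem_powerset.mp hT)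
  simp_rw [hF]
  rw [integral_finsetSum _ fun T hT => (integrable_const _).indicator (hmeasT T hT)]
  refine sum_congr rfl fun T hT => ?_
  rw [integral_indicator_const _ (hmeasT T hT), measureReal_positiveSet_eq hB (mem_powerset.mp hT),
    smul_eq_mul]

variable {Dk S : Finset ι}

lemma integral_card_inter_positiveSet_le (hB : IsBernoulliFamily P φ B)
    (hφ : ∀ x, 0 ≤ φ x ∧ φ x ≤ 1) (hDkD : Dk ⊆ D) (htop : ∀ x ∈ Dk, ∀ y ∈ D \ Dk, φ y ≤ φ x)
    (hSD : S ⊆ D) (hcard : S.card = Dk.card)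
    (G : ℕ → ℕ → ℝ) (hG : ∀ m n, G m n ≤ G (m + 1) n) :
    ∫ ω, G (S ∩ positiveSet D B ω).card (positiveSet D B ω).card ∂P ≤
      ∫ ω, G (Dk ∩ positiveSet D B ω).card (positiveSet D B ω).card ∂P := by
  rw [integral_comp_positiveSet hB (fun T => G (S ∩ T).card T.card),
    integral_comp_positiveSet hB (fun T => G (Dk ∩ T).card T.card)]
  exact sum_bernoulliWeight_mul_le_top hφ hDkD htop hSD hcard G hG

lemma measure_card_inter_positiveSet_le (hB : IsBernoulliFamily P φ B)
    (hφ : ∀ x, 0 ≤ φ x ∧ φ x ≤ 1) (hDkD : Dk ⊆ D) (htop : ∀ x ∈ Dk, ∀ y ∈ D \ Dk, φ y ≤ φ x)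
    (hSD : S ⊆ D) (hcard : S.card = Dk.card)
    (G : ℕ → ℕ → ℝ) (hG : ∀ m n, G m n ≤ G (m + 1) n) (γ : ℝ) :
    P {ω | γ ≤ G (S ∩ positiveSet D B ω).card (positiveSet D B ω).card} ≤
      P {ω | γ ≤ G (Dk ∩ positiveSet D B ω).card (positiveSet D B ω).card} := by
  have hreal : ∀ U : Finset ι, P.real {ω | γ ≤ G (U ∩ positiveSet D B ω).card
      (positiveSet D B ω).card} = ∫ ω, (if γ ≤ G (U ∩ positiveSet D B ω).card
        (positiveSet D B ω).card then 1 else 0) ∂P := fun U =>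
    (integral_indicator_one (measurableSet_setOf_positiveSet hB.measurable hB.zero_or_one
      fun T => γ ≤ G (U ∩ T).card T.card)).symm
  rw [← ENNReal.toReal_le_toReal (measure_ne_top _ _) (measure_ne_top _ _), ← measureReal_def,
    ← measureReal_def, hreal, hreal]
  refine integral_card_inter_positiveSet_le hB hφ hDkD htop hSD hcard
    (fun m n => if γ ≤ G m n then 1 else 0) fun m n => ?_
  by_cases h : γ ≤ G m n
  · simp [h, h.trans (hG m n)]
  · split_ifs <;> norm_num

end Probability

theorem stmt_7_general {Ω ι : Type*} [MeasurableSpace Ω] [DecidableEq ι]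
    (P : Measure Ω) [IsProbabilityMeasure P]
    (D : Finset ι) (k : ℕ)
    (φ : ι → ℝ) (Dk : Finset ι) (hDkD : Dk ⊆ D) (hDkcard : Dk.card = k)
    (htop : ∀ x ∈ Dk, ∀ y ∈ D \ Dk, φ y ≤ φ x)
    (S : Finset ι) (hSD : S ⊆ D) (hScard : S.card = k)
    (hφ : ∀ x, 0 ≤ φ x ∧ φ x ≤ 1)
    (B : ι → Ω → ℕ)
    (hmeas : ∀ x, Measurable (B x))
    (hBern : ∀ x ω, B x ω = 0 ∨ B x ω = 1)
    (hprob : ∀ x, (P {ω | B x ω = 1}).toReal = φ x)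
    (hindep : iIndepFun B P)
    (γ : ℝ) :
    (P {ω | γ ≤ (∑ x ∈ S, B x ω : ℝ) / S.card} ≤
       P {ω | γ ≤ (∑ x ∈ Dk, B x ω : ℝ) / Dk.card}) ∧
    (P {ω | γ ≤ (if (∑ x ∈ D, B x ω) = 0 then (1 : ℝ)
          else (∑ x ∈ S, B x ω : ℝ) / (∑ x ∈ D, B x ω : ℝ))} ≤
       P {ω | γ ≤ (if (∑ x ∈ D, B x ω) = 0 then (1 : ℝ)
          else (∑ x ∈ Dk, B x ω : ℝ) / (∑ x ∈ D, B x ω : ℝ))}) ∧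
    (∫ ω, (∑ x ∈ S, B x ω : ℝ) / S.card ∂P ≤
       ∫ ω, (∑ x ∈ Dk, B x ω : ℝ) / Dk.card ∂P) ∧
    (∫ ω, (if (∑ x ∈ D, B x ω) = 0 then (1 : ℝ)
          else (∑ x ∈ S, B x ω : ℝ) / (∑ x ∈ D, B x ω : ℝ)) ∂P ≤
       ∫ ω, (if (∑ x ∈ D, B x ω) = 0 then (1 : ℝ)
          else (∑ x ∈ Dk, B x ω : ℝ) / (∑ x ∈ D, B x ω : ℝ)) ∂P) := by
  have hB : IsBernoulliFamily P φ B := ⟨hmeas, hBern, hprob, hindep⟩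
  have hcard : S.card = Dk.card := hScard.trans hDkcard.symm
  set precisionRate : ℕ → ℕ → ℝ := fun m _ => m / k
  set recallRate : ℕ → ℕ → ℝ := fun m n => if n = 0 then 1 else m / n
  have hprecision (U : Finset ι) (hU : U ⊆ D) (hUk : U.card = k) (ω : Ω) :
      (∑ x ∈ U, (B x ω : ℝ)) / U.card =
        precisionRate (U ∩ positiveSet D B ω).card (positiveSet D B ω).card := by
    rw [← Nat.cast_sum, sum_eq_card_inter_positiveSet hBern hU, hUk]
  have hrecall (U : Finset ι) (hU : U ⊆ D) (ω : Ω) :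
      (if ∑ x ∈ D, B x ω = 0 then 1 else (∑ x ∈ U, (B x ω : ℝ)) / ∑ x ∈ D, (B x ω : ℝ)) =
        recallRate (U ∩ positiveSet D B ω).card (positiveSet D B ω).card := by
    simp only [← Nat.cast_sum, sum_eq_card_inter_positiveSet hBern hU,
      sum_eq_card_positiveSet hBern, recallRate]
  have hprecision_mono (m n : ℕ) : precisionRate m n ≤ precisionRate (m + 1) n := by
    simp only [precisionRate]; gcongr; simp
  have hrecall_mono (m n : ℕ) : recallRate m n ≤ recallRate (m + 1) n := by
    simp only [recallRate]; split_ifs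
    · rfl
    · gcongr; simp
  simp only [hprecision S hSD hScard, hprecision Dk hDkD hDkcard, hrecall S hSD, hrecall Dk hDkD]
  exact ⟨measure_card_inter_positiveSet_le hB hφ hDkD htop hSD hcard _ hprecision_mono γ,
    measure_card_inter_positiveSet_le hB hφ hDkD htop hSD hcard _ hrecall_mono γ,
    integral_card_inter_positiveSet_le hB hφ hDkD htop hSD hcard _ hprecision_mono,
    integral_card_inter_positiveSet_le hB hφ hDkD htop hSD hcard _ hrecall_mono⟩

/-- Among all subsets of size `k`, the proxy top-`k` subset `Dk` (the `k`
elements of largest `φ`-values) maximizes both the success probability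
`Pr[M ≥ γ]` (for `M` precision or recall) and the expected complementary
rate (expected recall and expected precision). -/
theorem stmt_7 {Ω ι : Type*} [MeasurableSpace Ω] [DecidableEq ι]
    (P : Measure Ω) [IsProbabilityMeasure P]
    (D : Finset ι) (k : ℕ)
    (φ : ι → ℝ) (Dk : Finset ι) (hDkD : Dk ⊆ D) (hDkcard : Dk.card = k)
    (htop : ∀ x ∈ Dk, ∀ y ∈ D \ Dk, φ y ≤ φ x)
    (S : Finset ι) (hSD : S ⊆ D) (hScard : S.card = k)
    (hφ : ∀ x, 0 ≤ φ x ∧ φ x ≤ 1)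
    (B : ι → Ω → ℕ)
    (hmeas : ∀ x, Measurable (B x))
    (hBern : ∀ x ω, B x ω = 0 ∨ B x ω = 1)
    (hprob : ∀ x, (P {ω | B x ω = 1}).toReal = φ x)
    (hindep : iIndepFun B P)
    (γ : ℝ) (hγ0 : 0 < γ) (hγ1 : γ < 1) :
    (P {ω | γ ≤ (∑ x ∈ S, B x ω : ℝ) / S.card} ≤
       P {ω | γ ≤ (∑ x ∈ Dk, B x ω : ℝ) / Dk.card}) ∧
    (P {ω | γ ≤ (if (∑ x ∈ D, B x ω) = 0 then (1 : ℝ)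
          else (∑ x ∈ S, B x ω : ℝ) / (∑ x ∈ D, B x ω : ℝ))} ≤
       P {ω | γ ≤ (if (∑ x ∈ D, B x ω) = 0 then (1 : ℝ)
          else (∑ x ∈ Dk, B x ω : ℝ) / (∑ x ∈ D, B x ω : ℝ))}) ∧
    (∫ ω, (∑ x ∈ S, B x ω : ℝ) / S.card ∂P ≤
       ∫ ω, (∑ x ∈ Dk, B x ω : ℝ) / Dk.card ∂P) ∧
    (∫ ω, (if (∑ x ∈ D, B x ω) = 0 then (1 : ℝ)
          else (∑ x ∈ S, B x ω : ℝ) / (∑ x ∈ D, B x ω : ℝ)) ∂P ≤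
       ∫ ω, (if (∑ x ∈ D, B x ω) = 0 then (1 : ℝ)
          else (∑ x ∈ Dk, B x ω : ℝ) / (∑ x ∈ D, B x ω : ℝ)) ∂P) :=
  stmt_7_general P D k φ Dk hDkD hDkcard htop S hSD hScard hφ B hmeas hBern hprob hindep γ
end

section
/- The function s ↦ EOC(s, m̲(s)) = N(1 - (1 - s/N)^{m̲(s)}), where m̲(s) = log(δ)/log(∏_{i=0}^{c-1}(N-s-i)/(N-i)), is monotonically decreasing in s on 1 ≤ s ≤ N - c. -/
/-! With `L t = -log (1 - t)`, the power `(1 - s/N) ^ m̲(s)` equals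
`δ ^ (L (s/N) / ∑ᵢ L (s/(N-i)))`, so it suffices that each ratio `L (s/(N-i)) / L (s/N)`
increases with `s`. Since `s/M = exp (log s - log M)`, this says that the increments of
`g x = log (L (exp x))` over the fixed step `log N - log M` increase, i.e. that `g` is convex on
`x < 0`. Its derivative is `(exp v - 1) / v` at `v = L (exp x)`, which increases with `x` by
convexity of `exp`. -/

open Finset Real Set

lemma ConvexOn.map_add_add_map_le {s : Set ℝ} {f : ℝ → ℝ} (hf : ConvexOn ℝ s f)
    {x y h : ℝ} (hx : x ∈ s) (hyh : y + h ∈ s) (hxy : x ≤ y) (hh : 0 ≤ h) :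
    f (x + h) + f y ≤ f x + f (y + h) := by
  rcases hh.eq_or_lt with rfl | hh
  · simp
  have hmem : ∀ z ∈ Icc x (y + h), z ∈ s := fun z hz => hf.1.ordConnected.out hx hyh hz
  have hxh := hf.secant_mono hx (hmem (x + h) ⟨by linarith, by linarith⟩) hyh (by linarith)
    (by linarith) (by linarith : x + h ≤ y + h)
  have hyh' := hf.secant_mono hyh hx (hmem y ⟨hxy, by linarith⟩) (by linarith) (by linarith) hxy
  rw [← neg_div_neg_eq (f x - _), ← neg_div_neg_eq (f y - _)] at hyh'
  have key := hxh.trans (by convert hyh' using 2 <;> ring)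
  rw [add_sub_cancel_left, show -(y - (y + h)) = h by ring,
    div_le_div_iff_of_pos_right hh] at key
  linarith

lemma exp_sub_one_div_le_exp_sub_one_div {v w : ℝ} (hv : 0 < v) (hvw : v ≤ w) :
    (exp v - 1) / v ≤ (exp w - 1) / w := by
  simpa using convexOn_exp.secant_mono (mem_univ 0) (mem_univ v) (mem_univ w) hv.ne'
    (hv.trans_le hvw).ne' hvw

lemma neg_log_one_sub_pos {t : ℝ} (ht₀ : 0 < t) (ht₁ : t < 1) : 0 < -log (1 - t) :=
  neg_pos.2 (log_neg (by linarith) (by linarith))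

lemma monotoneOn_div_one_sub_mul_neg_log_one_sub :
    MonotoneOn (fun t => t / ((1 - t) * -log (1 - t))) (Ioo 0 1) := by
  intro t₁ ⟨ht₁, ht₁'⟩ t₂ ⟨ht₂, ht₂'⟩ ht
  have hexp : ∀ t, t < 1 →
      t / ((1 - t) * -log (1 - t)) = (exp (-log (1 - t)) - 1) / -log (1 - t) := by
    intro t ht
    have : 0 < 1 - t := by linarith
    rw [exp_neg, exp_log this]
    field_simp
    ring
  simp only [hexp t₁ ht₁', hexp t₂ ht₂']
  exact exp_sub_one_div_le_exp_sub_one_div (neg_log_one_sub_pos ht₁ ht₁')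
    (neg_le_neg (log_le_log (by linarith) (by linarith)))

lemma hasDerivAt_log_neg_log_one_sub_exp {x : ℝ} (hx : x < 0) :
    HasDerivAt (fun x => log (-log (1 - exp x)))
      (exp x / ((1 - exp x) * -log (1 - exp x))) x := by
  have hexp : exp x < 1 := exp_lt_one_iff.2 hx
  have h := ((((hasDerivAt_exp x).const_sub 1).log (by linarith)).neg).log
    (neg_log_one_sub_pos (exp_pos x) hexp).ne'
  refine h.congr_deriv ?_
  change -(-exp x / (1 - exp x)) / -log (1 - exp x) = _
  field_simp

lemma convexOn_log_neg_log_one_sub_exp :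
    ConvexOn ℝ (Iio 0) (fun x => log (-log (1 - exp x))) := by
  have hderiv : ∀ x ∈ Iio (0 : ℝ), HasDerivAt (fun x => log (-log (1 - exp x)))
      (exp x / ((1 - exp x) * -log (1 - exp x))) x :=
    fun x hx => hasDerivAt_log_neg_log_one_sub_exp hx
  refine MonotoneOn.convexOn_of_deriv (convex_Iio 0)
    (fun x hx => (hderiv x hx).continuousAt.continuousWithinAt)
    (fun x hx => (hderiv x (interior_subset hx)).differentiableAt.differentiableWithinAt) ?_
  rw [interior_Iio]
  intro x hx y hy hxy
  rw [(hderiv x hx).deriv, (hderiv y hy).deriv]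
  exact monotoneOn_div_one_sub_mul_neg_log_one_sub ⟨exp_pos x, exp_lt_one_iff.2 hx⟩
    ⟨exp_pos y, exp_lt_one_iff.2 hy⟩ (exp_le_exp.2 hxy)

lemma log_one_sub_div_mul_log_one_sub_div_le {s₁ s₂ M N : ℝ} (hs₁ : 0 < s₁)
    (hs : s₁ ≤ s₂) (hM : s₂ < M) (hMN : M ≤ N) :
    log (1 - s₂ / N) * log (1 - s₁ / M) ≤ log (1 - s₁ / N) * log (1 - s₂ / M) := by
  have hN₀ : 0 < N := by linarith
  have hM₀ : 0 < M := by linarith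
  have hfrac : ∀ {s K : ℝ}, 0 < s → s < K → 0 < s / K ∧ s / K < 1 := fun hs hsK =>
    ⟨div_pos hs (hs.trans hsK), (div_lt_one (hs.trans hsK)).2 hsK⟩
  have h₁N := hfrac hs₁ (by linarith : s₁ < N)
  have h₂N := hfrac (hs₁.trans_le hs) (by linarith : s₂ < N)
  have h₁M := hfrac hs₁ (by linarith : s₁ < M)
  have h₂M := hfrac (hs₁.trans_le hs) hM
  have hshift : ∀ s, 0 < s → log (s / N) + log (N / M) = log (s / M) := fun s hs => by
    rw [← log_mul (by positivity) (by positivity), div_mul_div_cancel₀ hN₀.ne']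
  have key := convexOn_log_neg_log_one_sub_exp.map_add_add_map_le
    (x := log (s₁ / N)) (y := log (s₂ / N)) (h := log (N / M))
    (log_neg h₁N.1 h₁N.2) (by rw [hshift s₂ (by linarith)]; exact log_neg h₂M.1 h₂M.2)
    (log_le_log h₁N.1 (by gcongr)) (log_nonneg ((one_le_div hM₀).2 hMN))
  simp only [hshift s₁ hs₁, hshift s₂ (by linarith), exp_log h₁N.1, exp_log h₂N.1,
    exp_log h₁M.1, exp_log h₂M.1] at key
  have p₁N := neg_log_one_sub_pos h₁N.1 h₁N.2
  have p₂N := neg_log_one_sub_pos h₂N.1 h₂N.2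
  have p₁M := neg_log_one_sub_pos h₁M.1 h₁M.2
  have p₂M := neg_log_one_sub_pos h₂M.1 h₂M.2
  rw [← log_mul p₁M.ne' p₂N.ne', ← log_mul p₁N.ne' p₂M.ne',
    log_le_log_iff (by positivity) (by positivity)] at key
  linarith

lemma log_one_sub_div_mul_sum_le {ι : Type*} (t : Finset ι) (M : ι → ℝ) {s₁ s₂ N : ℝ}
    (hs₁ : 0 < s₁) (hs : s₁ ≤ s₂) (hM : ∀ i ∈ t, s₂ < M i ∧ M i ≤ N) :
    log (1 - s₂ / N) * ∑ i ∈ t, log (1 - s₁ / M i)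
      ≤ log (1 - s₁ / N) * ∑ i ∈ t, log (1 - s₂ / M i) := by
  rw [mul_sum, mul_sum]
  exact sum_le_sum fun i hi =>
    log_one_sub_div_mul_log_one_sub_div_le hs₁ hs (hM i hi).1 (hM i hi).2

lemma log_one_sub_div_div_sum_le {ι : Type*} (t : Finset ι) (M : ι → ℝ) {s₁ s₂ N : ℝ}
    (hs₁ : 0 < s₁) (hs : s₁ ≤ s₂) (hM : ∀ i ∈ t, s₂ < M i ∧ M i ≤ N) :
    log (1 - s₂ / N) / ∑ i ∈ t, log (1 - s₂ / M i)
      ≤ log (1 - s₁ / N) / ∑ i ∈ t, log (1 - s₁ / M i) := by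
  rcases t.eq_empty_or_nonempty with rfl | ht
  · simp
  have hneg : ∀ s, 0 < s → s ≤ s₂ → ∑ i ∈ t, log (1 - s / M i) < 0 := fun s hs hs₂ =>
    sum_neg (fun i hi => log_neg (sub_pos.2 ((div_lt_one (by linarith [hM i hi])).2
      (by linarith [hM i hi]))) (sub_lt_self 1 (div_pos hs (by linarith [hM i hi])))) ht
  rw [← neg_div_neg_eq, ← neg_div_neg_eq (log _),
    div_le_div_iff₀ (neg_pos.2 (hneg s₂ (hs₁.trans_le hs) le_rfl))
      (neg_pos.2 (hneg s₁ hs₁ hs)),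
    neg_mul_neg, neg_mul_neg]
  exact log_one_sub_div_mul_sum_le t M hs₁ hs hM

lemma log_prod_sub_sub_div_sub {N s : ℝ} {c : ℕ} (hs : 0 ≤ s) (hsN : s ≤ N - c) :
    log (∏ i ∈ range c, (N - s - i) / (N - i)) = ∑ i ∈ range c, log (1 - s / (N - i)) := by
  have hi : ∀ i ∈ range c, s + 1 ≤ N - i := fun i hi => by
    have : (i : ℝ) + 1 ≤ c := by exact_mod_cast mem_range.1 hi
    linarith
  rw [log_prod fun i hi' => (div_pos (by linarith [hi i hi']) (by linarith [hi i hi'])).ne']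
  refine sum_congr rfl fun i hi' => ?_
  rw [one_sub_div (by linarith [hi i hi']), sub_right_comm]

theorem stmt_14_general (N c : ℕ) (hc : 1 ≤ c)
    (δ : ℝ) (hδ0 : 0 < δ) (hδ1 : δ < 1) :
    ∀ s₁ s₂ : ℝ, 1 ≤ s₁ → s₁ ≤ s₂ → s₂ ≤ (N : ℝ) - c →
      (N : ℝ) * (1 - (1 - s₂ / N) ^
          (Real.log δ /
            Real.log (∏ i ∈ Finset.range c, ((N : ℝ) - s₂ - i) / ((N : ℝ) - i))))
        ≤ (N : ℝ) * (1 - (1 - s₁ / N) ^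
          (Real.log δ /
            Real.log (∏ i ∈ Finset.range c, ((N : ℝ) - s₁ - i) / ((N : ℝ) - i)))) := by
  intro s₁ s₂ h₁ h₁₂ h₂
  have hc' : (1 : ℝ) ≤ c := by exact_mod_cast hc
  have hpow : ∀ s : ℝ, 1 ≤ s → s ≤ N - c →
      (1 - s / N) ^ (log δ / log (∏ i ∈ range c, ((N : ℝ) - s - i) / ((N : ℝ) - i)))
        = exp (log δ * (log (1 - s / N) / ∑ i ∈ range c, log (1 - s / (N - i)))) := by
    intro s hs hsN
    rw [rpow_def_of_pos (sub_pos.2 ((div_lt_one (by linarith)).2 (by linarith))),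
      log_prod_sub_sub_div_sub (by linarith) hsN]
    ring_nf
  have hratio := log_one_sub_div_div_sum_le (range c) (fun i => (N : ℝ) - i) (N := N)
    (by linarith : (0 : ℝ) < s₁) h₁₂ fun i hi => by
      have : (i : ℝ) + 1 ≤ c := by exact_mod_cast mem_range.1 hi
      constructor <;> linarith
  rw [hpow s₁ h₁ (h₁₂.trans h₂), hpow s₂ (h₁.trans h₁₂) h₂]
  gcongr N * (1 - exp ?_)
  exact mul_le_mul_of_nonpos_left hratio (log_nonpos hδ0.le hδ1.le)

/-- The function `s ↦ EOC(s, m̲(s)) = N(1 - (1 - s/N)^{m̲(s)})`, where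
`m̲(s) = log δ / log(∏_{i=0}^{c-1}(N-s-i)/(N-i))`, is monotonically
decreasing in `s` on `1 ≤ s ≤ N - c`. -/
theorem stmt_14 (N c : ℕ) (hc : 1 ≤ c) (hcN : c < N)
    (δ : ℝ) (hδ0 : 0 < δ) (hδ1 : δ < 1) :
    ∀ s₁ s₂ : ℝ, 1 ≤ s₁ → s₁ ≤ s₂ → s₂ ≤ (N : ℝ) - c →
      (N : ℝ) * (1 - (1 - s₂ / N) ^
          (Real.log δ /
            Real.log (∏ i ∈ Finset.range c, ((N : ℝ) - s₂ - i) / ((N : ℝ) - i))))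
        ≤ (N : ℝ) * (1 - (1 - s₁ / N) ^
          (Real.log δ /
            Real.log (∏ i ∈ Finset.range c, ((N : ℝ) - s₁ - i) / ((N : ℝ) - i)))) :=
  stmt_14_general N c hc δ hδ0 hδ1
end

section
/- For integers N > c ≥ 1, the quantity h(c) = log(N/c) / (Σ_{i=0}^{c-1} log((N-i)/(c-i))) satisfies h(c) ≥ 1/(cN). -/
/-!
Since `N - i = (c - i) + (N - c)` and `c - i ≥ 1`, the bound `log x ≤ x - 1` makes every summand of
the denominator at most `N - c`, so the denominator is at most `c (N - c)`. The numerator is at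
least `1 - c / N = (N - c) / N` by `1 - 1/x ≤ log x`, and the ratio is at least `1 / (c N)`.
-/

open Finset Real

lemma log_add_div_self_le {a t : ℝ} (ha : 1 ≤ a) (ht : 0 ≤ t) : log ((a + t) / a) ≤ t := by
  have ha₀ : 0 < a := by linarith
  calc log ((a + t) / a) ≤ (a + t) / a - 1 := log_le_sub_one_of_pos (by positivity)
    _ = t / a := by field_simp; ring
    _ ≤ t := div_le_self ht ha

lemma one_le_sub_of_mem_range {c i : ℕ} (hi : i ∈ range c) : (1 : ℝ) ≤ c - i := by
  have : (i : ℝ) + 1 ≤ c := by exact_mod_cast mem_range.mp hi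
  linarith

lemma log_sub_div_sub_le {N : ℝ} {c i : ℕ} (hcN : (c : ℝ) ≤ N) (hi : i ∈ range c) :
    log ((N - i) / ((c : ℝ) - i)) ≤ N - c := by
  have h := log_add_div_self_le (one_le_sub_of_mem_range hi) (sub_nonneg.mpr hcN)
  rwa [sub_add_sub_cancel'] at h

lemma sum_range_log_sub_div_sub_le {N : ℝ} {c : ℕ} (hcN : (c : ℝ) ≤ N) :
    ∑ i ∈ range c, log ((N - i) / ((c : ℝ) - i)) ≤ c * (N - c) := by
  simpa using sum_le_card_nsmul _ _ _ fun i hi => log_sub_div_sub_le hcN hi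

lemma sum_range_log_sub_div_sub_pos {N : ℝ} {c : ℕ} (hc : 1 ≤ c) (hcN : (c : ℝ) < N) :
    0 < ∑ i ∈ range c, log ((N - i) / ((c : ℝ) - i)) := by
  refine sum_pos' (fun i hi => log_nonneg ?_) ⟨0, mem_range.mpr hc, ?_⟩
  · have h := one_le_sub_of_mem_range hi
    rw [le_div_iff₀ (by linarith)]
    linarith
  · have hc₀ : (0 : ℝ) < c := by exact_mod_cast hc
    simpa using log_pos ((one_lt_div hc₀).mpr hcN)

/-- For integers `N > c ≥ 1`,
`h(c) = log(N/c) / (Σ_{i=0}^{c-1} log((N-i)/(c-i)))` satisfies `h(c) ≥ 1/(cN)`. -/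
theorem stmt_16 (N c : ℕ) (hc : 1 ≤ c) (hcN : c < N) :
    Real.log ((N : ℝ) / c) /
        (∑ i ∈ Finset.range c, Real.log (((N : ℝ) - i) / ((c : ℝ) - i))) ≥
      1 / ((c : ℝ) * N) := by
  have hc₀ : (0 : ℝ) < c := by exact_mod_cast hc
  have hcN' : (c : ℝ) < N := by exact_mod_cast hcN
  have hN₀ : (0 : ℝ) < N := hc₀.trans hcN'
  have hlog : 1 - c / N ≤ log (N / c) := by
    simpa [inv_div] using one_sub_inv_le_log_of_pos (div_pos hN₀ hc₀)
  rw [ge_iff_le, div_le_div_iff₀ (by positivity) (sum_range_log_sub_div_sub_pos hc hcN')]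
  calc 1 * ∑ i ∈ range c, log ((N - i) / ((c : ℝ) - i)) ≤ c * (N - c) := by
        simpa using sum_range_log_sub_div_sub_le hcN'.le
    _ = (1 - c / N) * (c * N) := by field_simp
    _ ≤ log (N / c) * (c * N) := by gcongr
end

section
/- The savings ratio of the s=1 strategy satisfies ξ(1, m(1)) ≥ δ^{(-1/c)(1/N - N/(N-1))} · (1 - 1/N), where m(1) = ⌈log(δ)/log(∏_{i=0}^{c-1}(N-1-i)/(N-i))⌉ and ξ(s,m) = (N - EOC(s,m))/(N - EOC(s*, m*)) with (s*,m*) minimizing EOC subject to the success-probability constraint. -/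
open Real Finset

/-!
The product `P = ∏_{i<c} (N-1-i)/(N-i)` telescopes to `1 - c/N`, which by Bernoulli's inequality
is at most `a^c` for `a = 1 - 1/N`; hence `log a / log P ≤ 1/c`. Rounding the exponent up costs
at most one factor `a`, so `a^m(1) ≥ a · a^(log δ / log P) = a · δ^(log a / log P) ≥ a · δ^(1/c)`.
The savings ratio is `a^m(1) / (1 - s*/N)^m*`, and its denominator is at most `a` as soon as
`s*, m* ≥ 1`. Since the exponent of `δ` in the claim is at least `1/c`, the bound follows.
-/

lemma prod_range_sub_one_sub_div_sub {N c : ℕ} (hcN : c ≤ N) :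
    ∏ i ∈ range c, ((N : ℝ) - 1 - i) / ((N : ℝ) - i) = 1 - c / N := by
  induction c with
  | zero => simp
  | succ c ih =>
    have hcN' : (c : ℝ) + 1 ≤ N := by exact_mod_cast hcN
    have hN : (N : ℝ) ≠ 0 := by linarith [(c.cast_nonneg : (0 : ℝ) ≤ c)]
    have hNc : (N : ℝ) - c ≠ 0 := by linarith
    rw [prod_range_succ, ih (by omega)]
    field_simp
    push_cast
    ring

lemma one_sub_div_le_one_sub_one_div_pow {N : ℝ} (hN : 1 ≤ N) (c : ℕ) :
    1 - c / N ≤ (1 - 1 / N) ^ c := by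
  have hbound : -2 ≤ -(1 / N) := by
    have : 1 / N ≤ 1 := by rw [div_le_one (by linarith)]; exact hN
    linarith
  simpa [sub_eq_add_neg, div_eq_mul_inv] using one_add_mul_le_pow hbound c

lemma log_div_log_le_one_div_of_le_pow {a P : ℝ} {c : ℕ} (hc : 0 < c) (ha0 : 0 < a) (ha1 : a < 1)
    (hP : 0 < P) (hPa : P ≤ a ^ c) :
    log a / log P ≤ 1 / c := by
  have hloga : log a < 0 := log_neg ha0 ha1
  have hlogP : log P ≤ c * log a := by
    simpa [log_pow] using log_le_log hP hPa
  have hcR : (0 : ℝ) < c := by exact_mod_cast hc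
  rw [div_le_iff_of_neg (by nlinarith), one_div_mul_eq_div, div_le_iff₀ hcR]
  linarith

lemma rpow_log_div_log_comm {a δ : ℝ} (ha : 0 < a) (hδ : 0 < δ) (P : ℝ) :
    a ^ (log δ / log P) = δ ^ (log a / log P) := by
  rw [rpow_def_of_pos ha, rpow_def_of_pos hδ]
  ring_nf

lemma mul_rpow_le_pow_natCeil {a x : ℝ} (ha0 : 0 < a) (ha1 : a ≤ 1) (hx : 0 ≤ x) :
    a * a ^ x ≤ a ^ ⌈x⌉₊ := by
  rw [← rpow_natCast, mul_comm, ← rpow_add_one ha0.ne']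
  exact rpow_le_rpow_of_exponent_ge ha0 ha1 (Nat.ceil_lt_add_one hx).le

lemma mul_rpow_one_div_le_pow_natCeil_log_div_log {a δ P : ℝ} {c : ℕ} (hc : 0 < c)
    (ha0 : 0 < a) (ha1 : a < 1) (hδ0 : 0 < δ) (hδ1 : δ < 1) (hP : 0 < P) (hPa : P ≤ a ^ c) :
    a * δ ^ (1 / (c : ℝ)) ≤ a ^ ⌈log δ / log P⌉₊ := by
  have hlogP : log P < 0 := log_neg hP (hPa.trans_lt (pow_lt_one₀ ha0.le ha1 hc.ne'))
  have hx : 0 ≤ log δ / log P := div_nonneg_of_nonpos (log_neg hδ0 hδ1).le hlogP.le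
  calc a * δ ^ (1 / (c : ℝ))
      ≤ a * δ ^ (log a / log P) := by
        refine mul_le_mul_of_nonneg_left ?_ ha0.le
        exact rpow_le_rpow_of_exponent_ge hδ0 hδ1.le
          (log_div_log_le_one_div_of_le_pow hc ha0 ha1 hP hPa)
    _ = a * a ^ (log δ / log P) := by rw [rpow_log_div_log_comm ha0 hδ0]
    _ ≤ a ^ ⌈log δ / log P⌉₊ := mul_rpow_le_pow_natCeil ha0 ha1.le hx

lemma one_div_le_neg_one_div_mul_one_div_sub_div_sub_one {N : ℝ} (hN : 1 < N) {c : ℝ}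
    (hc : 0 ≤ c) :
    1 / c ≤ -1 / c * (1 / N - N / (N - 1)) := by
  have hN' : 1 ≤ N / (N - 1) - 1 / N := by
    rw [div_sub_div _ _ (by linarith) (by linarith), le_div_iff₀ (by nlinarith)]
    nlinarith
  calc 1 / c = 1 / c * 1 := (mul_one _).symm
    _ ≤ 1 / c * (N / (N - 1) - 1 / N) := mul_le_mul_of_nonneg_left hN' (by positivity)
    _ = -1 / c * (1 / N - N / (N - 1)) := by ring

lemma one_sub_div_pos {k N : ℕ} (h : k < N) : 0 < 1 - (k : ℝ) / N := by
  rw [sub_pos, div_lt_one (by exact_mod_cast k.zero_le.trans_lt h)]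
  exact_mod_cast h

lemma one_sub_div_pow_le_one_sub_one_div {s N m : ℕ} (hs : 1 ≤ s) (hsN : s < N) (hm : m ≠ 0) :
    (1 - (s : ℝ) / N) ^ m ≤ 1 - 1 / N := by
  have hsN' : (1 : ℝ) - s / N ≤ 1 - 1 / N := by
    gcongr
    exact_mod_cast hs
  refine (pow_le_of_le_one (one_sub_div_pos hsN).le (hsN'.trans ?_) hm).trans hsN'
  linarith [one_div_nonneg.2 (N.cast_nonneg : (0 : ℝ) ≤ N)]

theorem stmt_17_general (N c : ℕ) (hc : 1 ≤ c) (hcN : c < N)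
    (δ : ℝ) (hδ0 : 0 < δ) (hδ1 : δ < 1)
    (sstar mstar : ℕ) (hs1 : 1 ≤ sstar) (hssc : sstar + c ≤ N) (hm1 : 1 ≤ mstar) :
    ((N : ℝ) - (N : ℝ) * (1 - (1 - 1 / (N : ℝ)) ^
        (⌈Real.log δ / Real.log (∏ i ∈ Finset.range c,
            ((N : ℝ) - 1 - i) / ((N : ℝ) - i))⌉₊))) /
      ((N : ℝ) - (N : ℝ) * (1 - (1 - (sstar : ℝ) / N) ^ mstar)) ≥
    δ ^ ((-1 / (c : ℝ)) * (1 / (N : ℝ) - (N : ℝ) / ((N : ℝ) - 1))) *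
      (1 - 1 / (N : ℝ)) := by
  have hN : (1 : ℝ) < N := by exact_mod_cast hc.trans_lt hcN
  have ha0 : 0 < 1 - 1 / (N : ℝ) := by simpa using one_sub_div_pos (hc.trans_lt hcN)
  have ha1 : 1 - 1 / (N : ℝ) < 1 := by linarith [one_div_pos.2 (by linarith : (0 : ℝ) < N)]
  have hnum := mul_rpow_one_div_le_pow_natCeil_log_div_log (by omega) ha0 ha1 hδ0 hδ1
    (one_sub_div_pos hcN) (one_sub_div_le_one_sub_one_div_pow hN.le c)
  rw [← prod_range_sub_one_sub_div_sub hcN.le] at hnum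
  have hsaved (t : ℝ) : (N : ℝ) - N * (1 - t) = N * t := by ring
  rw [ge_iff_le, hsaved, hsaved, mul_div_mul_left _ _ (by positivity)]
  calc δ ^ (-1 / (c : ℝ) * (1 / N - N / (N - 1))) * (1 - 1 / N)
      ≤ δ ^ (-1 / (c : ℝ) * (1 / N - N / (N - 1))) :=
        mul_le_of_le_one_right (by positivity) ha1.le
    _ ≤ δ ^ (1 / (c : ℝ)) := rpow_le_rpow_of_exponent_ge hδ0 hδ1.le
        (one_div_le_neg_one_div_mul_one_div_sub_div_sub_one hN c.cast_nonneg)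
    _ ≤ (1 - 1 / N) ^ _ / (1 - 1 / N) := by rw [le_div_iff₀ ha0, mul_comm]; exact hnum
    _ ≤ (1 - 1 / N) ^ _ / (1 - sstar / N) ^ mstar :=
        div_le_div_of_nonneg_left (by positivity) (pow_pos (one_sub_div_pos (by omega)) _)
          (one_sub_div_pow_le_one_sub_one_div hs1 (by omega) (by omega))

/-- The savings ratio of the `s = 1` strategy satisfies
`ξ(1, m(1)) ≥ δ^{(-1/c)(1/N - N/(N-1))} · (1 - 1/N)`, where
`m(1) = ⌈log δ / log(∏_{i=0}^{c-1}(N-1-i)/(N-i))⌉`,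
`ξ(s,m) = (N - EOC(s,m))/(N - EOC(s*,m*))`, `EOC(s,m) = N(1-(1-s/N)^m)`,
and `(s*,m*)` minimizes `EOC` over integer pairs satisfying the
success-probability constraint `1-(∏_{i=0}^{c-1}(N-s-i)/(N-i))^m ≥ 1-δ`. -/
theorem stmt_17 (N c : ℕ) (hc : 1 ≤ c) (hcN : c < N)
    (δ : ℝ) (hδ0 : 0 < δ) (hδ1 : δ < 1)
    (sstar mstar : ℕ) (hs1 : 1 ≤ sstar) (hssc : sstar + c ≤ N) (hm1 : 1 ≤ mstar)
    (hfeas : 1 - (∏ i ∈ Finset.range c,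
        ((N : ℝ) - sstar - i) / ((N : ℝ) - i)) ^ mstar ≥ 1 - δ)
    (hopt : ∀ s m : ℕ, 1 ≤ s → s + c ≤ N → 1 ≤ m →
      1 - (∏ i ∈ Finset.range c, ((N : ℝ) - s - i) / ((N : ℝ) - i)) ^ m ≥ 1 - δ →
      (N : ℝ) * (1 - (1 - (sstar : ℝ) / N) ^ mstar) ≤
        (N : ℝ) * (1 - (1 - (s : ℝ) / N) ^ m)) :
    ((N : ℝ) - (N : ℝ) * (1 - (1 - 1 / (N : ℝ)) ^
        (⌈Real.log δ / Real.log (∏ i ∈ Finset.range c,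
            ((N : ℝ) - 1 - i) / ((N : ℝ) - i))⌉₊))) /
      ((N : ℝ) - (N : ℝ) * (1 - (1 - (sstar : ℝ) / N) ^ mstar)) ≥
    δ ^ ((-1 / (c : ℝ)) * (1 / (N : ℝ) - (N : ℝ) / ((N : ℝ) - 1))) *
      (1 - 1 / (N : ℝ)) :=
  stmt_17_general N c hc hcN δ hδ0 hδ1 sstar mstar hs1 hssc hm1
end

section
/- For s_1 = ⌈-log(δ)/Σ_{i=0}^{c-1} 1/(N-i)⌉ and m = 1, the single-sample strategy satisfies the success constraint: ∏_{i=0}^{c-1}(N-s_1-i)/(N-i) ≤ δ, i.e. f(N, s_1, 1, c) ≥ 1 - δ. -/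
/-!
Each factor is `1 - s₁/(N-i) ≤ exp(-s₁/(N-i))`, so the product is at most `exp(-s₁ Σ 1/(N-i))`,
and the ceiling in `s₁` makes `s₁ Σ 1/(N-i) ≥ -log δ`.
-/

open Finset Real

theorem prod_sub_div_le_exp {ι : Type*} (t : Finset ι) (x : ι → ℝ) (s : ℝ)
    (hx : ∀ i ∈ t, 0 < x i) (hs : ∀ i ∈ t, s ≤ x i) :
    ∏ i ∈ t, (x i - s) / x i ≤ exp (-(s * ∑ i ∈ t, 1 / x i)) := by
  rw [mul_sum, ← sum_neg_distrib, exp_sum]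
  refine prod_le_prod (fun i hi => div_nonneg (sub_nonneg.2 (hs i hi)) (hx i hi).le)
    fun i hi => ?_
  calc (x i - s) / x i = -(s * (1 / x i)) + 1 := by field_simp [(hx i hi).ne']; ring
    _ ≤ exp (-(s * (1 / x i))) := add_one_le_exp _

theorem stmt_18_general (N c : ℕ) (hc : 1 ≤ c)
    (δ : ℝ) (hδ0 : 0 < δ)
    (hs1c : ⌈(-Real.log δ) / (∑ i ∈ Finset.range c, 1 / ((N : ℝ) - i))⌉₊ + c ≤ N) :
    ∏ i ∈ Finset.range c,
      ((N : ℝ) - (⌈(-Real.log δ) /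
          (∑ j ∈ Finset.range c, 1 / ((N : ℝ) - j))⌉₊ : ℕ) - i) / ((N : ℝ) - i)
      ≤ δ := by
  set S : ℝ := ∑ i ∈ range c, 1 / ((N : ℝ) - i)
  set s : ℕ := ⌈-log δ / S⌉₊
  have hs_add : ∀ i ∈ range c, (s : ℝ) + i ≤ N := fun i hi => by
    have := mem_range.1 hi
    exact_mod_cast (show s + i ≤ N by omega)
  have hx : ∀ i ∈ range c, (0 : ℝ) < N - i := fun i hi => by
    have := mem_range.1 hi
    have : (i : ℝ) < N := by exact_mod_cast (show i < N by omega)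
    linarith
  have hS : 0 < S := sum_pos (fun i hi => one_div_pos.2 (hx i hi)) (nonempty_range_iff.2 (by omega))
  have hsS : -log δ ≤ s * S := (div_le_iff₀ hS).1 (Nat.le_ceil _)
  calc ∏ i ∈ range c, ((N : ℝ) - s - i) / (N - i)
      = ∏ i ∈ range c, ((N - i) - s) / ((N : ℝ) - i) := prod_congr rfl fun i _ => by ring
    _ ≤ exp (-(s * S)) :=
      prod_sub_div_le_exp _ _ _ hx fun i hi => by linarith [hs_add i hi]
    _ ≤ exp (log δ) := exp_le_exp.2 (by linarith)
    _ = δ := exp_log hδ0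

/-- For `s₁ = ⌈-log δ / Σ_{i=0}^{c-1} 1/(N-i)⌉` and `m = 1`, the
single-sample strategy satisfies the success constraint:
`∏_{i=0}^{c-1}(N-s₁-i)/(N-i) ≤ δ`. -/
theorem stmt_18 (N c : ℕ) (hc : 1 ≤ c) (hcN : c < N)
    (δ : ℝ) (hδ0 : 0 < δ) (hδ1 : δ < 1)
    (hs1c : ⌈(-Real.log δ) / (∑ i ∈ Finset.range c, 1 / ((N : ℝ) - i))⌉₊ + c ≤ N) :
    ∏ i ∈ Finset.range c,
      ((N : ℝ) - (⌈(-Real.log δ) /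
          (∑ j ∈ Finset.range c, 1 / ((N : ℝ) - j))⌉₊ : ℕ) - i) / ((N : ℝ) - i)
      ≤ δ :=
  stmt_18_general N c hc δ hδ0 hs1c
end
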